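/- arXiv:2309.05389 — 9 statements merged into one kernel-verified Lean document; each statement's English description precedes it below -/
import Mathlib

section
/- For any Kripke structure M, state formula φ, tag U ⊆ S, and state s with s ∉ U: s ∈ ⟦EG φ⟧_U if and only if s ∈ ⟦φ⟧_∅ ∩ pre∃(⟦EG φ⟧_{U∪{s}}) ∪ U, where ⟦EG φ⟧_U = νY.(⟦φ⟧_∅ ∩ pre∃(Y) ∪ U). -/
variable {S : Type*}

def lfp (f : Set S → Set S) : Set S := ⋂₀ {X | f X ⊆ X}
def gfp (f : Set S → Set S) : Set S := ⋃₀ {X | X ⊆ f X}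

def preE (r : S → S → Prop) (Y : Set S) : Set S := {s | ∃ s' ∈ Y, r s s'}
def preA (r : S → S → Prop) (Y : Set S) : Set S := {s | ∀ s', r s s' → s' ∈ Y}

def egSem (r : S → S → Prop) (phi : Set S) (U : Set S) : Set S :=
  gfp (fun Y => phi ∩ preE r Y ∪ U)
def agSem (r : S → S → Prop) (phi : Set S) (U : Set S) : Set S :=
  gfp (fun Y => phi ∩ preA r Y ∪ U)
def efSem (r : S → S → Prop) (phi : Set S) (U : Set S) : Set S :=
  lfp (fun Y => (phi ∪ preE r Y) \ U)
def afSem (r : S → S → Prop) (phi : Set S) (U : Set S) : Set S :=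
  lfp (fun Y => (phi ∪ preA r Y) \ U)

lemma gfp_le {f : Set S → Set S} {X : Set S} (h : X ⊆ f X) : X ⊆ gfp f :=
  Set.subset_sUnion_of_mem h

lemma gfp_postfix {f : Set S → Set S} (hm : ∀ ⦃A B : Set S⦄, A ⊆ B → f A ⊆ f B) :
    gfp f ⊆ f (gfp f) := by
  rintro x ⟨X, hX, hxX⟩
  exact hm (gfp_le hX) (hX hxX)

lemma gfp_fixed {f : Set S → Set S} (hm : ∀ ⦃A B : Set S⦄, A ⊆ B → f A ⊆ f B) :
    f (gfp f) = gfp f :=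
  subset_antisymm (gfp_le (hm (gfp_postfix hm))) (gfp_postfix hm)

lemma preE_mono {r : S → S → Prop} {A B : Set S} (h : A ⊆ B) : preE r A ⊆ preE r B := by
  rintro x ⟨y, hy, hr⟩; exact ⟨y, h hy, hr⟩

lemma egF_mono (r : S → S → Prop) (phi U : Set S) :
    ∀ ⦃A B : Set S⦄, A ⊆ B →
      (fun Y => phi ∩ preE r Y ∪ U) A ⊆ (fun Y => phi ∩ preE r Y ∪ U) B := by
  intro A B h
  exact Set.union_subset_union_left U (Set.inter_subset_inter_right phi (preE_mono h))

lemma egSem_fixed (r : S → S → Prop) (phi U : Set S) :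
    phi ∩ preE r (egSem r phi U) ∪ U = egSem r phi U :=
  gfp_fixed (egF_mono r phi U)

theorem eg_unfold (r : S → S → Prop) (phi U : Set S) (s : S) (hs : s ∉ U) :
    s ∈ egSem r phi U ↔ s ∈ phi ∩ preE r (egSem r phi (U ∪ {s})) ∪ U := by
  constructor
  · intro h
    rw [← egSem_fixed r phi U] at h
    rcases h with ⟨hphi, hpre⟩ | hU
    · left
      refine ⟨hphi, preE_mono ?_ hpre⟩
      exact gfp_le (le_trans (show egSem r phi U ≤ phi ∩ preE r (egSem r phi U) ∪ U from gfp_postfix (egF_mono r phi U))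
        (egF_mono r phi (U ∪ {s}) (le_refl _) |>.trans' (by
          intro x hx
          rcases hx with hx | hx
          · exact Or.inl hx
          · exact Or.inr (Or.inl hx))))
    · exact Or.inr hU
  · intro h
    rcases h with ⟨hphi, hpre⟩ | hU
    · -- show egSem (U∪{s}) ∪ {s} is a postfixed point of F_U
      have key : egSem r phi (U ∪ {s}) ∪ {s} ⊆
          phi ∩ preE r (egSem r phi (U ∪ {s}) ∪ {s}) ∪ U := by
        rintro x (hx | hx)
        · rw [← egSem_fixed r phi (U ∪ {s})] at hx
          rcases hx with ⟨hp, hq⟩ | (hU' | hs')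
          · exact Or.inl ⟨hp, preE_mono Set.subset_union_left hq⟩
          · exact Or.inr hU'
          · rw [hs']
            exact Or.inl ⟨hphi, preE_mono Set.subset_union_left hpre⟩
        · rw [hx]
          exact Or.inl ⟨hphi, preE_mono Set.subset_union_left hpre⟩
      exact gfp_le key (Or.inr rfl)
    · exact (egSem_fixed r phi U) ▸ Or.inr hU
end

section
/- For any Kripke structure M, state formula φ, tag U ⊆ S, and state s with s ∉ U: s ∈ ⟦EF φ⟧_U if and only if s ∈ (⟦φ⟧_∅ ∪ pre∃(⟦EF φ⟧_{U∪{s}})) \ U, where ⟦EF φ⟧_U = μY.((⟦φ⟧_∅ ∪ pre∃(Y)) \ U). -/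
variable {S : Type*}

inductive Reaches (r : S → S → Prop) (phi : Set S) : Set S → S → Prop
  | base {U s} : s ∈ phi → s ∉ U → Reaches r phi U s
  | step {U s t} : r s t → Reaches r phi U t → s ∉ U → Reaches r phi U s

lemma Reaches.not_mem {r : S → S → Prop} {phi U : Set S} {s : S}
    (h : Reaches r phi U s) : s ∉ U := by
  cases h <;> assumption

lemma Reaches.mono_tag {r : S → S → Prop} {phi U V : Set S} {s : S}
    (hUV : U ⊆ V) (h : Reaches r phi V s) : Reaches r phi U s := by
  induction h with
  | base h1 h2 => exact .base h1 fun hx => h2 (hUV hx)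
  | step hr _ h2 ih => exact .step hr ih fun hx => h2 (hUV hx)

lemma lfp_le {f : Set S → Set S} {X : Set S} (hX : f X ⊆ X) : lfp f ⊆ X :=
  fun _ hx => hx X hX

lemma lfp_prefixed {f : Set S → Set S} (hf : Monotone f) : f (lfp f) ⊆ lfp f := by
  intro x hx X hX
  exact hX (hf (lfp_le hX) hx)

lemma ef_mono (r : S → S → Prop) (phi U : Set S) :
    Monotone (fun Y : Set S => (phi ∪ preE r Y) \ U) := by
  intro A B hAB x hx
  refine ⟨?_, hx.2⟩
  rcases hx.1 with h | ⟨t, ht, hr⟩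
  · exact Or.inl h
  · exact Or.inr ⟨t, hAB ht, hr⟩

lemma efSem_eq_reaches (r : S → S → Prop) (phi U : Set S) :
    efSem r phi U = {s | Reaches r phi U s} := by
  apply Set.Subset.antisymm
  · apply lfp_le
    rintro x ⟨h1, h2⟩
    rcases h1 with h | ⟨t, ht, hr⟩
    · exact Reaches.base h h2
    · exact Reaches.step hr ht h2
  · intro x hx
    induction hx with
    | base h1 h2 => exact lfp_prefixed (ef_mono r phi U) ⟨Or.inl h1, h2⟩
    | step hr _ h2 ih =>
        exact lfp_prefixed (ef_mono r phi U) ⟨Or.inr ⟨_, ih, hr⟩, h2⟩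

lemma reaches_key {r : S → S → Prop} {phi U : Set S} {s x : S}
    (h : Reaches r phi U x) :
    Reaches r phi (U ∪ {s}) x ∨
      (s ∈ phi ∨ ∃ t, r s t ∧ Reaches r phi (U ∪ {s}) t) := by
  induction h with
  | @base y h1 h2 =>
      by_cases hy : y = s
      · exact Or.inr (Or.inl (hy ▸ h1))
      · exact Or.inl (.base h1 (by simp [hy, h2]))
  | @step y t hr _ h2 ih =>
      rcases ih with ht | hdone
      · by_cases hy : y = s
        · exact Or.inr (Or.inr ⟨t, hy ▸ hr, ht⟩)
        · exact Or.inl (.step hr ht (by simp [hy, h2]))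
      · exact Or.inr hdone

theorem ef_unfold (r : S → S → Prop) (phi U : Set S) (s : S) (hs : s ∉ U) :
    s ∈ efSem r phi U ↔ s ∈ (phi ∪ preE r (efSem r phi (U ∪ {s}))) \ U := by
  rw [efSem_eq_reaches, efSem_eq_reaches]
  constructor
  · intro h
    refine ⟨?_, hs⟩
    rcases reaches_key (s := s) h with hbad | h
    · exact absurd (hbad.not_mem) (by simp)
    · rcases h with h | ⟨t, hr, ht⟩
      · exact Or.inl h
      · exact Or.inr ⟨t, ht, hr⟩
  · rintro ⟨h, -⟩
    rcases h with h | ⟨t, ht, hr⟩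
    · exact .base h hs
    · exact Reaches.step hr (ht.mono_tag (Set.subset_union_left)) hs
end

section
/- Soundness of rule EG₂: if s ∉ U, s ∈ ⟦φ⟧_∅, and there exists s' with s → s' and s' ∈ ⟦EG φ⟧_{U∪{s}}, then s ∈ ⟦EG φ⟧_U. -/
variable {S : Type*}

theorem eg2_sound (r : S → S → Prop) (phi U : Set S) (s : S) (hs : s ∉ U)
    (hphi : s ∈ phi) (hsucc : ∃ s', r s s' ∧ s' ∈ egSem r phi (U ∪ {s})) :
    s ∈ egSem r phi U := by
  obtain ⟨s', hr, Y, hY, hs'Y⟩ := hsucc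
  refine ⟨Y ∪ {s}, ?_, Or.inr rfl⟩
  intro t ht
  rcases ht with ht | ht
  · rcases hY ht with ⟨htphi, w, hw, hrw⟩ | hU | hts
    · exact Or.inl ⟨htphi, w, Or.inl hw, hrw⟩
    · exact Or.inr hU
    · cases hts; exact Or.inl ⟨hphi, s', Or.inl hs'Y, hr⟩
  · cases ht; exact Or.inl ⟨hphi, s', Or.inl hs'Y, hr⟩
end

section
/- Soundness of rule EF₂: if s ∉ U and there exists s' with s → s' and s' ∈ ⟦EF φ⟧_{U∪{s}}, then s ∈ ⟦EF φ⟧_U. -/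
variable {S : Type*}

theorem ef2_sound (r : S → S → Prop) (phi U : Set S) (s : S) (hs : s ∉ U)
    (hsucc : ∃ s', r s s' ∧ s' ∈ efSem r phi (U ∪ {s})) :
    s ∈ efSem r phi U := by
  obtain ⟨s', hrs, hs'⟩ := hsucc
  intro X hX
  simp only [Set.mem_setOf_eq] at hX
  have hX' : (phi ∪ preE r X) \ (U ∪ {s}) ⊆ X := fun x hx =>
    hX ⟨hx.1, fun h => hx.2 (Or.inl h)⟩
  have hs'X : s' ∈ X := hs' X hX'
  exact hX ⟨Or.inr ⟨s', hs'X, hrs⟩, hs⟩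
end

section
/- Soundness of rule AG₂: if s ∉ U, s ∈ ⟦φ⟧_∅, and every s' with s → s' satisfies s' ∈ ⟦AG φ⟧_{U∪{s}}, then s ∈ ⟦AG φ⟧_U. -/
variable {S : Type*}

theorem ag2_sound (r : S → S → Prop) (phi U : Set S) (s : S) (hs : s ∉ U)
    (hphi : s ∈ phi) (hsucc : ∀ s', r s s' → s' ∈ agSem r phi (U ∪ {s})) :
    s ∈ agSem r phi U := by
  -- The witness post-fixpoint
  set A := agSem r phi (U ∪ {s}) with hA
  have hpost : A ⊆ phi ∩ preA r A ∪ (U ∪ {s}) := by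
    intro t ht
    rcases ht with ⟨Y, hY, htY⟩
    have := hY htY
    rcases this with h | h
    · left
      exact ⟨h.1, fun s' hr => ⟨Y, hY, h.2 s' hr⟩⟩
    · right; exact h
  have key : ({s} ∪ A : Set S) ⊆ phi ∩ preA r ({s} ∪ A) ∪ U := by
    intro t ht
    have hscase : t = s → t ∈ phi ∩ preA r ({s} ∪ A) ∪ U := by
      intro he; subst he
      left
      exact ⟨hphi, fun s' hr => Or.inr (hsucc s' hr)⟩
    rcases ht with h | h
    · exact hscase h
    · rcases hpost h with h' | h'
      · left
        exact ⟨h'.1, fun s' hr => Or.inr (h'.2 s' hr)⟩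
      · rcases h' with h' | h'
        · right; exact h'
        · exact hscase h'
  exact ⟨{s} ∪ A, key, Or.inl rfl⟩
end

section
/- Soundness of rule AF₂: if s ∉ U and every s' with s → s' satisfies s' ∈ ⟦AF φ⟧_{U∪{s}}, then s ∈ ⟦AF φ⟧_U. -/
variable {S : Type*}

theorem af2_sound (r : S → S → Prop) (phi U : Set S) (s : S) (hs : s ∉ U)
    (hsucc : ∀ s', r s s' → s' ∈ afSem r phi (U ∪ {s})) :
    s ∈ afSem r phi U := by
  simp only [afSem, lfp, Set.mem_sInter, Set.mem_setOf_eq] at *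
  intro X hX
  have hsub : ∀ s', r s s' → s' ∈ X := by
    intro s' hr
    apply hsucc s' hr X
    intro x hx
    apply hX
    exact ⟨hx.1, fun h => hx.2 (Or.inl h)⟩
  apply hX
  exact ⟨Or.inr hsub, hs⟩
end

section
/- Reversibility of rules EG₁/EG₂: if s ∈ ⟦EG φ⟧_U and s ∉ U, then s ∈ ⟦φ⟧_∅ and there exists s' with s → s' and s' ∈ ⟦EG φ⟧_{U∪{s}}. -/
variable {S : Type*}

theorem eg_reversible (r : S → S → Prop) (phi U : Set S) (s : S)
    (h : s ∈ egSem r phi U) (hs : s ∉ U) :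
    s ∈ phi ∧ ∃ s', r s s' ∧ s' ∈ egSem r phi (U ∪ {s}) := by
  obtain ⟨X, hX, hsX⟩ := h
  have hfX : X ⊆ phi ∩ preE r X ∪ U := hX
  have hsf := hfX hsX
  rcases hsf with ⟨hphi, s', hs'X, hrs⟩ | hU
  · refine ⟨hphi, s', hrs, X, ?_, hs'X⟩
    intro x hx
    rcases hfX hx with h1 | h2
    · exact Or.inl h1
    · exact Or.inr (Or.inl h2)
  · exact absurd hU hs
end

section
/- Reversibility of rules EF₁/EF₂: if s ∈ ⟦EF φ⟧_U and s ∉ U, then either s ∈ ⟦φ⟧_∅ or there exists s' with s → s' and s' ∈ ⟦EF φ⟧_{U∪{s}}. -/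
variable {S : Type*}

lemma ef_prefixed (r : S → S → Prop) (phi U : Set S) :
    (phi ∪ preE r (efSem r phi U)) \ U ⊆ efSem r phi U := by
  intro t ht X hX
  apply hX
  refine ⟨?_, ht.2⟩
  rcases ht.1 with h | ⟨t', ht', hr⟩
  · exact Or.inl h
  · exact Or.inr ⟨t', lfp_le hX ht', hr⟩

theorem ef_reversible (r : S → S → Prop) (phi U : Set S) (s : S)
    (h : s ∈ efSem r phi U) (hs : s ∉ U) :
    s ∈ phi ∨ ∃ s', r s s' ∧ s' ∈ efSem r phi (U ∪ {s}) := by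
  by_contra hc
  push_neg at hc
  obtain ⟨hphi, hsucc⟩ := hc
  set E := efSem r phi (U ∪ {s}) with hE
  -- s ∉ E
  have hsE : s ∉ E := by
    intro hmem
    have : E ⊆ {s}ᶜ := lfp_le (by
      intro t ht
      exact fun hts => ht.2 (Or.inr hts))
    exact this hmem rfl
  -- under the negation, E is a prefixed point of the U-functional
  have hpre : (phi ∪ preE r E) \ U ⊆ E := by
    intro t ht
    rcases eq_or_ne t s with rfl | hne
    · rcases ht.1 with h' | ⟨t', ht', hr⟩
      · exact absurd h' hphi
      · exact absurd ht' (hsucc t' hr)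
    · exact ef_prefixed r phi (U ∪ {s}) ⟨ht.1.imp id (fun ⟨t', ht', hr⟩ => ⟨t', ht', hr⟩),
        fun hmem => hmem.elim ht.2 hne⟩
  exact hsE (lfp_le (f := fun Y => (phi ∪ preE r Y) \ U) hpre h)
end

section
/- Reversibility of rules AG₁/AG₂: if s ∈ ⟦AG φ⟧_U and s ∉ U, then s ∈ ⟦φ⟧_∅ and every s' with s → s' satisfies s' ∈ ⟦AG φ⟧_{U∪{s}}. -/
variable {S : Type*}

theorem ag_reversible (r : S → S → Prop) (phi U : Set S) (s : S)
    (h : s ∈ agSem r phi U) (hs : s ∉ U) :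
    s ∈ phi ∧ ∀ s', r s s' → s' ∈ agSem r phi (U ∪ {s}) := by
  obtain ⟨X, hX, hsX⟩ := h
  have hstep := hX hsX
  rcases hstep with ⟨hphi, hpre⟩ | hU
  · refine ⟨hphi, fun s' hr => ⟨X, ?_, hpre s' hr⟩⟩
    intro x hx
    rcases hX hx with h' | h'
    · exact Or.inl h'
    · exact Or.inr (Or.inl h')
  · exact absurd hU hs
end
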